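/- For two parallel copies of ℝ^d in ℝ^D separated by a vector v ⊥ ℝ^d, with equal on-manifold density ψ and mixture weights (1−λ, λ), the mixture weight of the far component satisfies λρ_t²(x)/ρ_t(x) = λ / ((1−λ)e^{‖v‖²/(2t)} + λ) for x on the first manifold, and hence β_t(x) = β_t¹(x) + λ‖v‖² / (t((1−λ)e^{‖v‖²/(2t)} + λ)), whose second term tends to 0 as t → 0⁺. -/

import Mathlib

open MeasureTheory Real Filter Set Topology

/-- Density of the centered Gaussian on `ℝ^n` with covariance `t • I`. -/
noncomputable def gauss (n : ℕ) (t : ℝ) (x : EuclideanSpace ℝ (Fin n)) : ℝ :=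
  (2 * π * t) ^ (-(n : ℝ) / 2) * Real.exp (-‖x‖ ^ 2 / (2 * t))

/-- One-dimensional centered Gaussian density with variance `t`. -/
noncomputable def gauss1 (t u : ℝ) : ℝ :=
  (2 * π * t) ^ (-(1 : ℝ) / 2) * Real.exp (-u ^ 2 / (2 * t))

/-- Euclidean Laplacian: sum of second derivatives along coordinate directions. -/
noncomputable def laplacian {n : ℕ} (f : EuclideanSpace ℝ (Fin n) → ℝ)
    (x : EuclideanSpace ℝ (Fin n)) : ℝ :=
  ∑ i : Fin n, iteratedDeriv 2 (fun s : ℝ => f (x + s • EuclideanSpace.single i 1)) 0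

/-- Convolution of two functions on `ℝ^n`. -/
noncomputable def conv' {n : ℕ} (f g : EuclideanSpace ℝ (Fin n) → ℝ)
    (x : EuclideanSpace ℝ (Fin n)) : ℝ :=
  ∫ y, f y * g (x - y)

/-- Convolution of two functions on `ℝ`. -/
noncomputable def conv1 (f g : ℝ → ℝ) (x : ℝ) : ℝ :=
  ∫ y, f y * g (x - y)

/-- Laplacian on the product space ℝ^d × ℝ^m, as the sum of the Laplacians
in the two groups of variables. -/
noncomputable def fullLap {d m : ℕ}
    (f : EuclideanSpace ℝ (Fin d) → EuclideanSpace ℝ (Fin m) → ℝ)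
    (x : EuclideanSpace ℝ (Fin d)) (y : EuclideanSpace ℝ (Fin m)) : ℝ :=
  laplacian (fun x' => f x' y) x + laplacian (fun y' => f x y') y

/- ### Auxiliary lemmas -/

lemma polyHD (a b : ℝ) (s : ℝ) : HasDerivAt (fun s : ℝ => s^2 + b*s + a) (2*s + b) s := by
  have h := ((hasDerivAt_pow 2 s).add (((hasDerivAt_id s).const_mul b).add_const a))
  refine HasDerivAt.congr_of_eventuallyEq (h.congr_deriv ?_) (Eventually.of_forall fun x => ?_)
  · norm_num
  · simp only [Pi.add_apply, id]; ring

lemma keyHD (t a b : ℝ) (s : ℝ) :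
    HasDerivAt (fun s : ℝ => Real.exp (-(s^2 + b*s + a)/(2*t)))
      ((-(2*s+b)/(2*t)) * Real.exp (-(s^2 + b*s + a)/(2*t))) s := by
  have h1 : HasDerivAt (fun s : ℝ => -(s^2 + b*s + a)/(2*t)) (-(2*s+b)/(2*t)) s :=
    ((polyHD a b s).neg).div_const (2*t)
  have := h1.exp
  convert this using 1
  ring

lemma keyHD2 (t a b : ℝ) :
    HasDerivAt (fun s : ℝ => (-(2*s+b)/(2*t)) * Real.exp (-(s^2 + b*s + a)/(2*t)))
      ((-(1/t) + b^2/(4*t^2)) * Real.exp (-a/(2*t))) 0 := by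
  have h1 : HasDerivAt (fun s : ℝ => -(2*s+b)/(2*t)) (-(2)/(2*t)) 0 := by
    have h := (((hasDerivAt_id (0:ℝ)).const_mul 2).add_const b).neg.div_const (2*t)
    exact h.congr_deriv (by ring)
  have h := h1.mul (keyHD t a b 0)
  refine h.congr_deriv ?_
  rcases eq_or_ne t 0 with h0 | h0
  · simp [h0]
  · have e : (0:ℝ)^2 + b*0 + a = a := by ring
    rw [e]
    field_simp
    ring

lemma iteratedDeriv_two (f : ℝ → ℝ) : iteratedDeriv 2 f = deriv (deriv f) := by
  rw [iteratedDeriv_succ, iteratedDeriv_one]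

lemma iteratedDeriv2_mul_const (f : ℝ → ℝ) (c : ℝ) (x : ℝ) :
    iteratedDeriv 2 (fun s => f s * c) x = iteratedDeriv 2 f x * c := by
  rw [iteratedDeriv_two, iteratedDeriv_two, deriv_mul_const_field', deriv_mul_const_field]

lemma d2combo (t a1 b1 a2 b2 c1 c2 : ℝ) :
    iteratedDeriv 2 (fun s : ℝ => c1 * Real.exp (-(s^2+b1*s+a1)/(2*t))
        + c2 * Real.exp (-(s^2+b2*s+a2)/(2*t))) 0
      = c1 * ((-(1/t) + b1^2/(4*t^2)) * Real.exp (-a1/(2*t)))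
        + c2 * ((-(1/t) + b2^2/(4*t^2)) * Real.exp (-a2/(2*t))) := by
  rw [iteratedDeriv_two]
  have hder : deriv (fun s : ℝ => c1 * Real.exp (-(s^2+b1*s+a1)/(2*t))
      + c2 * Real.exp (-(s^2+b2*s+a2)/(2*t)))
      = fun s => c1 * ((-(2*s+b1)/(2*t)) * Real.exp (-(s^2+b1*s+a1)/(2*t)))
        + c2 * ((-(2*s+b2)/(2*t)) * Real.exp (-(s^2+b2*s+a2)/(2*t))) :=
    funext fun s => (((keyHD t a1 b1 s).const_mul c1).add ((keyHD t a2 b2 s).const_mul c2)).deriv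
  rw [hder]
  exact (((keyHD2 t a1 b1).const_mul c1).add ((keyHD2 t a2 b2).const_mul c2)).deriv

lemma laplacian_mul_const {n : ℕ} (f : EuclideanSpace ℝ (Fin n) → ℝ) (c : ℝ)
    (x : EuclideanSpace ℝ (Fin n)) :
    laplacian (fun x' => f x' * c) x = laplacian f x * c := by
  unfold laplacian
  rw [Finset.sum_mul]
  exact Finset.sum_congr rfl fun i _ => iteratedDeriv2_mul_const _ c 0

lemma gauss_cont (n : ℕ) (t : ℝ) : Continuous (gauss n t) := by
  unfold gauss
  fun_prop

lemma gauss_pos (n : ℕ) {t : ℝ} (ht : 0 < t) (x : EuclideanSpace ℝ (Fin n)) : 0 < gauss n t x := by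
  unfold gauss
  positivity

lemma gauss_integrable (n : ℕ) {t : ℝ} (ht : 0 < t) : Integrable (gauss n t) := by
  have hb : (0:ℝ) < (1/(2*t)) := by positivity
  have h := GaussianFourier.integrable_cexp_neg_mul_sq_norm_add (V := EuclideanSpace ℝ (Fin n))
    (b := ((1/(2*t) : ℝ) : ℂ)) (by simpa using hb) 0 0
  have h2 : Integrable (fun y : EuclideanSpace ℝ (Fin n) => Real.exp (-‖y‖^2/(2*t))) := by
    have := h.re
    refine this.congr (Eventually.of_forall fun y => ?_)
    have : (-((1/(2*t):ℝ):ℂ) * (‖y‖:ℂ)^2 + 0 * (inner ℝ 0 y : ℝ)) = (((-‖y‖^2/(2*t) : ℝ)):ℂ) := by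
      push_cast
      ring
    simp only []
    rw [this, ← Complex.ofReal_exp]
    exact Complex.ofReal_re _
  have := h2.const_mul ((2 * π * t) ^ (-(n : ℝ) / 2))
  exact this.congr (Eventually.of_forall fun y => rfl)

lemma conv_pos {d : ℕ} (ψ : EuclideanSpace ℝ (Fin d) → ℝ) (hcont : Continuous ψ)
    (hψpos : ∀ z, 0 < ψ z) (M : ℝ) (hM : ∀ z, ψ z ≤ M) {t : ℝ} (ht : 0 < t)
    (x : EuclideanSpace ℝ (Fin d)) : 0 < conv' ψ (gauss d t) x := by
  have hint : Integrable (fun y => ψ y * gauss d t (x - y)) := by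
    have hg : Integrable (fun y : EuclideanSpace ℝ (Fin d) => gauss d t (x - y)) :=
      (gauss_integrable d ht).comp_sub_left x
    refine (hg.const_mul M).mono ?_ (Eventually.of_forall fun y => ?_)
    · exact (hcont.mul
        ((gauss_cont d t).comp (continuous_const.sub continuous_id))).aestronglyMeasurable
    · have h1 : 0 < gauss d t (x - y) := gauss_pos d ht _
      have h2 : 0 < ψ y := hψpos y
      have hM0 : (0:ℝ) < M := lt_of_lt_of_le (hψpos y) (hM y)
      rw [Real.norm_eq_abs, Real.norm_eq_abs, abs_of_pos (by positivity),
        abs_of_pos (by positivity)]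
      exact mul_le_mul_of_nonneg_right (hM y) h1.le
  rw [show conv' ψ (gauss d t) x = ∫ y, ψ y * gauss d t (x - y) from rfl]
  rw [integral_pos_iff_support_of_nonneg (fun y => (mul_pos (hψpos y) (gauss_pos d ht _)).le) hint]
  have hsupp : Function.support (fun y => ψ y * gauss d t (x - y)) = Set.univ :=
    Set.eq_univ_of_forall fun y => (mul_pos (hψpos y) (gauss_pos d ht _)).ne'
  rw [hsupp]
  exact isOpen_univ.measure_pos _ Set.univ_nonempty

lemma sum_coord_sq {m : ℕ} (v : EuclideanSpace ℝ (Fin m)) :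
    ∑ i : Fin m, (v i)^2 = ‖v‖^2 := by
  rw [EuclideanSpace.norm_eq, Real.sq_sqrt (by positivity)]
  simp [Real.norm_eq_abs, sq_abs]


lemma part3_aux (w lam : ℝ) (hw : 0 < w) (hlam0 : 0 < lam) (h1l : (0:ℝ) < 1 - lam) :
    Filter.Tendsto (fun s => lam * w / (s * ((1 - lam) * Real.exp (w / (2 * s)) + lam)))
      (nhdsWithin 0 (Set.Ioi 0)) (nhds 0) := by
  have hA' : Tendsto (fun s : ℝ => s * Real.exp (w/(2*s))) (𝓝[>] (0:ℝ)) atTop := by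
    have hc : (0:ℝ) < w/2 := by positivity
    have hu : Tendsto (fun u : ℝ => Real.exp ((w/2)*u)/u) atTop atTop := by
      have h1 : Tendsto (fun y : ℝ => Real.exp y / y) atTop atTop := by
        simpa using Real.tendsto_exp_div_pow_atTop 1
      have h2 : Tendsto (fun u : ℝ => (w/2) * u) atTop atTop :=
        Tendsto.const_mul_atTop hc tendsto_id
      have h3 := (h1.comp h2).const_mul_atTop hc
      refine h3.congr' ?_
      filter_upwards [eventually_gt_atTop 0] with u hu0
      have : (w/2) * u ≠ 0 := by positivity
      simp only [Function.comp_apply]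
      field_simp
    have h4 := hu.comp tendsto_inv_nhdsGT_zero
    refine h4.congr' ?_
    filter_upwards [self_mem_nhdsWithin] with s hs
    have hs0 : (0:ℝ) < s := hs
    simp only [Function.comp_apply]
    have he : w/2 * s⁻¹ = w/(2*s) := by
      field_simp
    rw [he, div_eq_mul_inv, inv_inv, mul_comm]
  have hD : Tendsto (fun s : ℝ => s * ((1 - lam) * Real.exp (w/(2*s)) + lam))
      (𝓝[>] (0:ℝ)) atTop := by
    have hle : ∀ᶠ s in 𝓝[>] (0:ℝ), (1-lam)*(s*Real.exp (w/(2*s)))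
        ≤ s * ((1 - lam) * Real.exp (w/(2*s)) + lam) := by
      filter_upwards [self_mem_nhdsWithin] with s hs
      have hs0 : (0:ℝ) < s := hs
      nlinarith [Real.exp_pos (w/(2*s))]
    exact tendsto_atTop_mono' _ hle (hA'.const_mul_atTop h1l)
  exact tendsto_const_nhds.div_atTop hD


theorem parallel_manifolds (d D : ℕ) (hd : 0 < d) (hdD : d < D)
    (ψ : EuclideanSpace ℝ (Fin d) → ℝ) (hsmooth : ContDiff ℝ (⊤ : ℕ∞) ψ)
    (hψpos : ∀ z, 0 < ψ z) (hbdd : ∃ M, ∀ z, ψ z ≤ M) (hint : ∫ z, ψ z = 1)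
    (v : EuclideanSpace ℝ (Fin (D - d))) (hv : v ≠ 0)
    (lam : ℝ) (hlam0 : 0 < lam) (hlam1 : lam < 1)
    (t : ℝ) (ht : 0 < t) (x : EuclideanSpace ℝ (Fin d)) :
    (lam * (conv' ψ (gauss d t) x * gauss (D - d) t (0 - v))
        / ((1 - lam) * (conv' ψ (gauss d t) x * gauss (D - d) t 0)
            + lam * (conv' ψ (gauss d t) x * gauss (D - d) t (0 - v)))
      = lam / ((1 - lam) * Real.exp (‖v‖ ^ 2 / (2 * t)) + lam)) ∧
    (t * fullLap (fun x' y' =>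
            (1 - lam) * (conv' ψ (gauss d t) x' * gauss (D - d) t y')
              + lam * (conv' ψ (gauss d t) x' * gauss (D - d) t (y' - v))) x 0
        / ((1 - lam) * (conv' ψ (gauss d t) x * gauss (D - d) t 0)
            + lam * (conv' ψ (gauss d t) x * gauss (D - d) t (0 - v)))
      = t * fullLap (fun x' y' => conv' ψ (gauss d t) x' * gauss (D - d) t y') x 0
          / (conv' ψ (gauss d t) x * gauss (D - d) t 0)
        + lam * ‖v‖ ^ 2 / (t * ((1 - lam) * Real.exp (‖v‖ ^ 2 / (2 * t)) + lam))) ∧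
    Filter.Tendsto
      (fun s => lam * ‖v‖ ^ 2 / (s * ((1 - lam) * Real.exp (‖v‖ ^ 2 / (2 * s)) + lam)))
      (nhdsWithin 0 (Set.Ioi 0)) (nhds 0) := by
  have h1l : (0:ℝ) < 1 - lam := by linarith
  set A : EuclideanSpace ℝ (Fin d) → ℝ := conv' ψ (gauss d t) with hA
  obtain ⟨M, hM⟩ := hbdd
  have hAx : 0 < A x := conv_pos ψ hsmooth.continuous hψpos M hM ht x
  set cm : ℝ := (2 * π * t) ^ (-((D - d : ℕ) : ℝ) / 2) with hcm
  have hcmpos : 0 < cm := by rw [hcm]; positivity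
  set ep : ℝ := Real.exp (‖v‖^2/(2*t)) with hep
  have heppos : 0 < ep := Real.exp_pos _
  have hEv : Real.exp (-‖v‖^2/(2*t)) = ep⁻¹ := by rw [neg_div, Real.exp_neg]
  have hG0 : gauss (D - d) t 0 = cm := by
    simp [gauss, hcm]
  have hGv : gauss (D - d) t (0 - v) = cm * ep⁻¹ := by
    rw [gauss, zero_sub, norm_neg, hEv, hcm]
  have hw : 0 < ‖v‖^2 := by
    have := norm_pos_iff.mpr hv
    positivity
  have hepinv : (0:ℝ) < ep⁻¹ := inv_pos.mpr heppos
  have hepne : ep ≠ 0 := heppos.ne'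
  have hE2 : 0 < (1 - lam) * ep + lam := add_pos (mul_pos h1l heppos) hlam0
  refine ⟨?_, ?_, ?_⟩
  · -- Part 1
    rw [hG0, hGv]
    have hden : (0:ℝ) < (1 - lam) * (A x * cm) + lam * (A x * (cm * ep⁻¹)) :=
      add_pos (mul_pos h1l (mul_pos hAx hcmpos))
        (mul_pos hlam0 (mul_pos hAx (mul_pos hcmpos hepinv)))
    rw [div_eq_div_iff hden.ne' hE2.ne']
    field_simp
  · -- Part 2
    -- x-slices
    have hxs1 : (fun x' => (1 - lam) * (A x' * gauss (D - d) t 0)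
        + lam * (A x' * gauss (D - d) t (0 - v)))
        = fun x' => A x' * ((1 - lam) * cm + lam * (cm * ep⁻¹)) := by
      funext x'
      rw [hG0, hGv]
      ring
    have hxs2 : (fun x' => A x' * gauss (D - d) t 0) = fun x' => A x' * cm := by
      funext x'
      rw [hG0]
    -- y-slice of the mixture
    have hy1 : laplacian (fun y' => (1 - lam) * (A x * gauss (D - d) t y')
        + lam * (A x * gauss (D - d) t (y' - v))) 0
        = ∑ i : Fin (D - d), (((1-lam)*(A x*cm)) * ((-(1/t) + 0^2/(4*t^2)) * Real.exp (-0/(2*t)))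
          + (lam*(A x*cm)) * ((-(1/t) + (-2*(v i))^2/(4*t^2)) * Real.exp (-‖v‖^2/(2*t)))) := by
      unfold laplacian
      refine Finset.sum_congr rfl fun i _ => ?_
      have hfi : (fun s : ℝ => (1 - lam) * (A x * gauss (D - d) t (0 + s • EuclideanSpace.single i 1))
          + lam * (A x * gauss (D - d) t ((0 + s • EuclideanSpace.single i 1) - v)))
          = fun s : ℝ => ((1-lam)*(A x*cm)) * Real.exp (-(s^2+0*s+0)/(2*t))
            + (lam*(A x*cm)) * Real.exp (-(s^2+(-2*(v i))*s+‖v‖^2)/(2*t)) := by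
        funext s
        have e1 : ‖(0 : EuclideanSpace ℝ (Fin (D - d))) + s • EuclideanSpace.single i (1:ℝ)‖^2
            = s^2 + 0*s + 0 := by
          rw [zero_add]
          simp [norm_smul, EuclideanSpace.norm_single, Real.norm_eq_abs, sq_abs, mul_pow]
        have e2 : ‖((0 : EuclideanSpace ℝ (Fin (D - d))) + s • EuclideanSpace.single i (1:ℝ)) - v‖^2
            = s^2 + (-2*(v i))*s + ‖v‖^2 := by
          rw [zero_add, norm_sub_sq_real, real_inner_smul_left,
            EuclideanSpace.inner_single_left]
          simp only [norm_smul, EuclideanSpace.norm_single, Real.norm_eq_abs, norm_one,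
            mul_one, starRingEnd_apply, star_one, one_mul, mul_pow, sq_abs]
          ring
        rw [gauss, gauss, e1, e2, hcm]
        ring
      rw [hfi, d2combo]
    -- y-slice of the single component
    have hy2 : laplacian (fun y' => A x * gauss (D - d) t y') 0
        = ∑ i : Fin (D - d), ((A x*cm) * ((-(1/t) + 0^2/(4*t^2)) * Real.exp (-0/(2*t)))
          + (0:ℝ) * ((-(1/t) + 0^2/(4*t^2)) * Real.exp (-0/(2*t)))) := by
      unfold laplacian
      refine Finset.sum_congr rfl fun i _ => ?_
      have hfi : (fun s : ℝ => A x * gauss (D - d) t (0 + s • EuclideanSpace.single i 1))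
          = fun s : ℝ => (A x*cm) * Real.exp (-(s^2+0*s+0)/(2*t))
            + (0:ℝ) * Real.exp (-(s^2+0*s+0)/(2*t)) := by
        funext s
        have e1 : ‖(0 : EuclideanSpace ℝ (Fin (D - d))) + s • EuclideanSpace.single i (1:ℝ)‖^2
            = s^2 + 0*s + 0 := by
          rw [zero_add]
          simp [norm_smul, EuclideanSpace.norm_single, Real.norm_eq_abs, sq_abs, mul_pow]
        rw [gauss, e1, hcm]
        ring
      rw [hfi, d2combo]
    -- evaluate the sums
    have hsum1 : ∑ i : Fin (D - d), (((1-lam)*(A x*cm)) * ((-(1/t) + 0^2/(4*t^2)) * Real.exp (-0/(2*t)))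
          + (lam*(A x*cm)) * ((-(1/t) + (-2*(v i))^2/(4*t^2)) * Real.exp (-‖v‖^2/(2*t))))
        = ((D - d : ℕ):ℝ) * (((1-lam)*(A x*cm)) * (-(1/t)) + (lam*(A x*cm)) * ep⁻¹ * (-(1/t)))
          + (lam*(A x*cm)) * ep⁻¹ / t^2 * ‖v‖^2 := by
      have hterm : ∀ i : Fin (D - d), (((1-lam)*(A x*cm)) * ((-(1/t) + 0^2/(4*t^2)) * Real.exp (-0/(2*t)))
          + (lam*(A x*cm)) * ((-(1/t) + (-2*(v i))^2/(4*t^2)) * Real.exp (-‖v‖^2/(2*t))))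
          = (((1-lam)*(A x*cm)) * (-(1/t)) + (lam*(A x*cm)) * ep⁻¹ * (-(1/t)))
            + ((lam*(A x*cm)) * ep⁻¹ / t^2) * (v i)^2 := by
        intro i
        rw [hEv]
        simp only [neg_zero, zero_div, Real.exp_zero]
        ring
      rw [Finset.sum_congr rfl fun i _ => hterm i, Finset.sum_add_distrib,
        Finset.sum_const, ← Finset.mul_sum, sum_coord_sq]
      simp only [Finset.card_univ, Fintype.card_fin, nsmul_eq_mul]
      try ring
    have hsum2 : ∑ i : Fin (D - d), ((A x*cm) * ((-(1/t) + 0^2/(4*t^2)) * Real.exp (-0/(2*t)))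
          + (0:ℝ) * ((-(1/t) + 0^2/(4*t^2)) * Real.exp (-0/(2*t))))
        = ((D - d : ℕ):ℝ) * ((A x*cm) * (-(1/t))) := by
      rw [Finset.sum_const]
      simp only [neg_zero, zero_div, Real.exp_zero, zero_mul, add_zero, mul_one,
        Finset.card_univ, Fintype.card_fin, nsmul_eq_mul]
      try norm_num
    -- put together
    simp only [fullLap]
    rw [hxs1, hxs2, laplacian_mul_const, laplacian_mul_const, hy1, hy2, hsum1, hsum2,
      hG0, hGv]
    have htne : t ≠ 0 := ht.ne'
    have hAne : A x ≠ 0 := hAx.ne'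
    have hcmne : cm ≠ 0 := hcmpos.ne'
    have hepne : ep ≠ 0 := heppos.ne'
    have hden : (0:ℝ) < (1 - lam) * (A x * cm) + lam * (A x * (cm * ep⁻¹)) :=
      add_pos (mul_pos h1l (mul_pos hAx hcmpos))
        (mul_pos hlam0 (mul_pos hAx (mul_pos hcmpos hepinv)))
    field_simp
    ring
  · -- Part 3
    exact part3_aux (‖v‖^2) lam hw hlam0 h1l
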